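/- arXiv:2211.13935 — 3 statements merged into one kernel-verified Lean document; each statement's English description precedes it below -/
import Mathlib

section
/- Every matrix A ∈ ℝ^{m×n} can be transformed into a Toeplitz matrix by inserting additional rows: there exist M ≥ m, a Toeplitz matrix T ∈ ℝ^{M×n}, and a strictly increasing map ι : {1,…,m} → {1,…,M} such that row ι(k) of T equals row k of A for all k. -/
def IsToeplitz {m n : ℕ} (T : Matrix (Fin m) (Fin n) ℝ) : Prop :=
  ∀ (i i' : Fin m) (j j' : Fin n), (i : ℤ) - (j : ℤ) = (i' : ℤ) - (j' : ℤ) → T i j = T i' j'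

noncomputable def toepAux (m n : ℕ) (A : Matrix (Fin m) (Fin n) ℝ) (d : ℤ) : ℝ :=
  if hk : ((d + n - 1) / n).toNat < m ∧ (((d + n - 1) / n) * n - d).toNat < n
  then A ⟨_, hk.1⟩ ⟨_, hk.2⟩ else 0

lemma toepAux_eq (m n : ℕ) (hn : 0 < n) (A : Matrix (Fin m) (Fin n) ℝ)
    (k : Fin m) (j : Fin n) : toepAux m n A ((k : ℤ) * n - j) = A k j := by
  have hq : ((k : ℤ) * n - j + n - 1) / n = k := by
    have h1 : (k : ℤ) * n - j + n - 1 = ((n : ℤ) - 1 - j) + (k : ℤ) * n := by ring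
    rw [h1, Int.add_mul_ediv_right _ _ (by exact_mod_cast hn.ne'),
      Int.ediv_eq_zero_of_lt (by omega) (by omega), zero_add]
  unfold toepAux
  have hj : ((k : ℤ) * n) - ((k : ℤ) * n - j) = j := by ring
  simp only [hq, hj]
  have hjk : (j : ℤ).toNat < n := by omega
  have hkk : ((k : ℤ)).toNat < m := by omega
  rw [dif_pos ⟨hkk, hjk⟩]
  congr 1

theorem stmt_2 (m n : ℕ) (A : Matrix (Fin m) (Fin n) ℝ) :
    ∃ (M : ℕ) (_ : m ≤ M) (T : Matrix (Fin M) (Fin n) ℝ) (ι : Fin m → Fin M),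
      StrictMono ι ∧ IsToeplitz T ∧ ∀ k : Fin m, T (ι k) = A k := by
  rcases Nat.eq_zero_or_pos n with hn | hn
  · subst hn
    exact ⟨m, le_refl m, fun _ _ => 0, id, strictMono_id,
      fun i i' j j' _ => j.elim0, fun k => funext fun j => j.elim0⟩
  · refine ⟨m * n, Nat.le_mul_of_pos_right m hn,
      fun i j => toepAux m n A ((i : ℤ) - j),
      fun k => ⟨k * n, (Nat.mul_lt_mul_right hn).mpr k.isLt⟩, ?_, ?_, ?_⟩
    · intro a b hab
      simp only [Fin.mk_lt_mk]
      exact (Nat.mul_lt_mul_right hn).mpr hab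
    · intro i i' j j' h
      simp only [h]
    · intro k
      funext j
      have := toepAux_eq m n hn A k j
      simpa using this
end

section
/- Every matrix A ∈ ℝ^{m×n} can be transformed into a Hankel matrix by inserting additional rows: there exist M ≥ m, a Hankel matrix H ∈ ℝ^{M×n}, and a strictly increasing map ι : {1,…,m} → {1,…,M} such that row ι(k) of H equals row k of A for all k. -/
def IsHankel {m n : ℕ} (H : Matrix (Fin m) (Fin n) ℝ) : Prop :=
  ∀ (i i' : Fin m) (j j' : Fin n), (i : ℕ) + (j : ℕ) = (i' : ℕ) + (j' : ℕ) → H i j = H i' j'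

theorem stmt_3 (m n : ℕ) (A : Matrix (Fin m) (Fin n) ℝ) :
    ∃ (M : ℕ) (_ : m ≤ M) (H : Matrix (Fin M) (Fin n) ℝ) (ι : Fin m → Fin M),
      StrictMono ι ∧ IsHankel H ∧ ∀ k : Fin m, H (ι k) = A k := by
  rcases Nat.eq_zero_or_pos n with hn | hn
  · subst hn
    refine ⟨m, le_refl m, A, id, strictMono_id, fun i i' j _ _ => j.elim0, fun k => rfl⟩
  · rcases Nat.eq_zero_or_pos m with hm | hm
    · subst hm
      exact ⟨0, le_refl 0, fun i j => 0, id, strictMono_id,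
        fun i _ _ _ _ => rfl, fun k => k.elim0⟩
    · refine ⟨m * n, Nat.le_mul_of_pos_right m hn,
        (fun i j => if h : ((i : ℕ) + j) / n < m then
          A ⟨((i : ℕ) + j) / n, h⟩ ⟨((i : ℕ) + j) % n, Nat.mod_lt _ hn⟩ else 0),
        fun k => ⟨(k : ℕ) * n, by
          calc (k : ℕ) * n < m * n := (Nat.mul_lt_mul_right hn).2 k.isLt
          ⟩, ?_, ?_, ?_⟩
      · intro a b hab
        simp only [Fin.mk_lt_mk]
        exact (Nat.mul_lt_mul_right hn).2 hab
      · intro i i' j j' h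
        simp only [h]
      · intro k
        funext j
        have hd : ((k : ℕ) * n + (j : ℕ)) / n = (k : ℕ) := by
          rw [Nat.add_comm, Nat.add_mul_div_right _ _ hn, Nat.div_eq_of_lt j.isLt,
            Nat.zero_add]
        have hm' : ((k : ℕ) * n + (j : ℕ)) % n = (j : ℕ) := by
          rw [Nat.add_comm, Nat.add_mul_mod_self_right, Nat.mod_eq_of_lt j.isLt]
        simp only [hd, hm', k.isLt, dif_pos, Fin.eta]
end

section
/- Let Ω ⊆ ℝⁿ be compact and suppose for every f ∈ C(Ω, ℝ) and ε > 0 there exist m ∈ ℕ, B ∈ ℝ^{m×n}, c, d ∈ ℝ^m with sup_{x∈Ω} |f(x) − dᵀσ(Bx + c)| ≤ ε (σ applied coordinatewise). Then for every f ∈ C(Ω, ℝ) and ε > 0 there exist M ∈ ℕ, a Toeplitz matrix A ∈ ℝ^{M×n}, and a, b ∈ ℝ^M with sup_{x∈Ω} |f(x) − aᵀσ(Ax + b)| ≤ ε. -/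
theorem stmt_14 (n : ℕ) (Ω : Set (EuclideanSpace ℝ (Fin n))) (hΩ : IsCompact Ω)
    (σ : ℝ → ℝ)
    (huat : ∀ f : EuclideanSpace ℝ (Fin n) → ℝ, ContinuousOn f Ω → ∀ ε : ℝ, 0 < ε →
      ∃ (m : ℕ) (B : Matrix (Fin m) (Fin n) ℝ) (c d : Fin m → ℝ),
        ∀ x ∈ Ω, |f x - ∑ i, d i * σ (B.mulVec x i + c i)| ≤ ε) :
    ∀ f : EuclideanSpace ℝ (Fin n) → ℝ, ContinuousOn f Ω → ∀ ε : ℝ, 0 < ε →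
      ∃ (M : ℕ) (A : Matrix (Fin M) (Fin n) ℝ) (a b : Fin M → ℝ),
        IsToeplitz A ∧ ∀ x ∈ Ω, |f x - ∑ i, a i * σ (A.mulVec x i + b i)| ≤ ε := by
  classical
  intro f hf ε hε
  obtain ⟨m, B, c, d, hB⟩ := huat f hf ε hε
  rcases Nat.eq_zero_or_pos n with hn | hn
  · subst hn
    exact ⟨m, B, d, c, fun i i' j j' _ => j.elim0, hB⟩
  -- uniqueness of the decomposition k = p*n - j
  have uniq : ∀ (p p' : Fin m) (j j' : Fin n),
      (p : ℤ) * n - j = (p' : ℤ) * n - j' → p = p' ∧ j = j' := by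
    intro p p' j j' h
    have hj : ((j : ℕ) : ℤ) < n := by exact_mod_cast j.isLt
    have hj' : ((j' : ℕ) : ℤ) < n := by exact_mod_cast j'.isLt
    have hj0 : (0 : ℤ) ≤ ((j : ℕ) : ℤ) := Int.ofNat_nonneg _
    have hj0' : (0 : ℤ) ≤ ((j' : ℕ) : ℤ) := Int.ofNat_nonneg _
    have hn' : (0 : ℤ) < n := by exact_mod_cast hn
    have h1 : ((p : ℤ) - p') * n = (j : ℤ) - j' := by nlinarith [h]
    have hlt : (p : ℤ) - p' < 1 := by nlinarith
    have hgt : (-1 : ℤ) < (p : ℤ) - p' := by nlinarith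
    have hpp : (p : ℤ) = p' := by omega
    have hjj : (j : ℤ) = j' := by rw [hpp, sub_self, zero_mul] at h1; omega
    exact ⟨Fin.ext (by exact_mod_cast hpp), Fin.ext (by exact_mod_cast hjj)⟩
  -- the diagonal sequence
  set g : ℤ → ℝ := fun k =>
    if h : ∃ pj : Fin m × Fin n, k = (pj.1 : ℤ) * n - pj.2 then B h.choose.1 h.choose.2 else 0
    with hgdef
  have hg : ∀ (p : Fin m) (j : Fin n), g ((p : ℤ) * n - j) = B p j := by
    intro p j
    have hex : ∃ pj : Fin m × Fin n, ((p : ℤ) * n - j) = (pj.1 : ℤ) * n - pj.2 := ⟨(p, j), rfl⟩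
    rw [hgdef]
    simp only [dif_pos hex]
    obtain ⟨hp, hj⟩ := uniq hex.choose.1 p hex.choose.2 j hex.choose_spec.symm
    rw [hp, hj]
  -- embedding of row indices
  have hlt' : ∀ p : Fin m, (p : ℕ) * n < m * n := fun p =>
    (Nat.mul_lt_mul_right hn).mpr p.isLt
  set e : Fin m → Fin (m * n) := fun p => ⟨p * n, hlt' p⟩ with hedef
  have he_inj : Function.Injective e := by
    intro p p' h
    have h2 : (p : ℕ) * n = (p' : ℕ) * n := congrArg Fin.val h
    exact Fin.ext (Nat.eq_of_mul_eq_mul_right hn h2)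
  set A : Matrix (Fin (m * n)) (Fin n) ℝ := fun i j => g ((i : ℤ) - j) with hAdef
  set a : Fin (m * n) → ℝ :=
    fun i => if h : ∃ p : Fin m, (i : ℕ) = p * n then d h.choose else 0 with hadef
  set b : Fin (m * n) → ℝ :=
    fun i => if h : ∃ p : Fin m, (i : ℕ) = p * n then c h.choose else 0 with hbdef
  -- choice picks the right p
  have hch : ∀ (p : Fin m) (h : ∃ q : Fin m, ((e p : Fin (m * n)) : ℕ) = q * n),
      h.choose = p := by
    intro p h
    have h2 : (h.choose : ℕ) * n = (p : ℕ) * n := by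
      have h3 := h.choose_spec
      simp only [hedef] at h3
      exact h3.symm
    exact Fin.ext (Nat.eq_of_mul_eq_mul_right hn h2)
  have ha : ∀ p : Fin m, a (e p) = d p := by
    intro p
    have hex : ∃ q : Fin m, ((e p : Fin (m * n)) : ℕ) = q * n := ⟨p, rfl⟩
    rw [hadef]; simp only [dif_pos hex]; rw [hch p hex]
  have hb : ∀ p : Fin m, b (e p) = c p := by
    intro p
    have hex : ∃ q : Fin m, ((e p : Fin (m * n)) : ℕ) = q * n := ⟨p, rfl⟩
    rw [hbdef]; simp only [dif_pos hex]; rw [hch p hex]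
  have ha0 : ∀ i : Fin (m * n), i ∉ Finset.univ.image e → a i = 0 := by
    intro i hi
    simp only [hadef]
    rw [dif_neg]
    rintro ⟨p, hp⟩
    exact hi (Finset.mem_image.mpr ⟨p, Finset.mem_univ p, Fin.ext hp.symm⟩)
  refine ⟨m * n, A, a, b, fun i i' j j' h => by show g ((i : ℤ) - j) = g ((i' : ℤ) - j'); rw [h], ?_⟩
  intro x hx
  have hrow : ∀ p : Fin m, A.mulVec x (e p) = B.mulVec x p := by
    intro p
    simp only [Matrix.mulVec, dotProduct, hAdef]
    refine Finset.sum_congr rfl fun j _ => ?_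
    have : ((e p : Fin (m * n)) : ℤ) - (j : ℤ) = (p : ℤ) * n - j := by
      simp only [hedef]; push_cast; ring
    rw [this, hg]
  have hsum : ∑ i, a i * σ (A.mulVec x i + b i) = ∑ p, d p * σ (B.mulVec x p + c p) := by
    rw [← Finset.sum_subset (Finset.subset_univ (Finset.univ.image e))
      (fun i _ hi => by rw [ha0 i hi, zero_mul])]
    rw [Finset.sum_image (fun p _ q _ h => he_inj h)]
    exact Finset.sum_congr rfl fun p _ => by rw [ha, hb, hrow]
  rw [hsum]
  exact hB x hx
end
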